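/- arXiv:1210.8424 — 2 statements merged into one kernel-verified Lean document; each statement's English description precedes it below -/
import Mathlib

section
/- If G is a 3-free digraph on n vertices, then |N| ≥ (2/3)·S, where S is 24 times the number of directed 4-cycles and N is the set of ordered 4-tuples (a,b,c,d) of vertices such that no directed 4-vertex path has vertex set {a,b,c,d}. -/
/-- A digraph is 3-free: no directed cycles of length 1, 2 or 3. -/
def ThreeFree {V : Type*} (E : V → V → Prop) : Prop :=
  (∀ v, ¬ E v v) ∧ (∀ u v, ¬ (E u v ∧ E v u)) ∧
    ∀ u v w, ¬ (E u v ∧ E v w ∧ E w u)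

/-- `(u, w, v)` is an induced directed 3-vertex path. -/
def InducedP3 {V : Type*} (E : V → V → Prop) (u w v : V) : Prop :=
  u ≠ w ∧ w ≠ v ∧ u ≠ v ∧ E u w ∧ E w v ∧ ¬ E w u ∧ ¬ E v w ∧ ¬ E u v ∧ ¬ E v u

instance {V : Type*} [DecidableEq V] (E : V → V → Prop) [DecidableRel E] (u w v : V) :
    Decidable (InducedP3 E u w v) := by unfold InducedP3; infer_instance

/-- `w, x, y, z` form a directed 4-vertex path. -/
def IsPath4 {V : Type*} (E : V → V → Prop) (w x y z : V) : Prop :=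
  w ≠ x ∧ w ≠ y ∧ w ≠ z ∧ x ≠ y ∧ x ≠ z ∧ y ≠ z ∧ E w x ∧ E x y ∧ E y z

instance {V : Type*} [DecidableEq V] (E : V → V → Prop) [DecidableRel E] (w x y z : V) :
    Decidable (IsPath4 E w x y z) := by unfold IsPath4; infer_instance

/-- `w → x → y → z → w` is a directed 4-cycle. -/
def IsCycle4 {V : Type*} (E : V → V → Prop) (w x y z : V) : Prop :=
  w ≠ x ∧ w ≠ y ∧ w ≠ z ∧ x ≠ y ∧ x ≠ z ∧ y ≠ z ∧ E w x ∧ E x y ∧ E y z ∧ E z w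

instance {V : Type*} [DecidableEq V] (E : V → V → Prop) [DecidableRel E] (w x y z : V) :
    Decidable (IsCycle4 E w x y z) := by unfold IsCycle4; infer_instance

/-- The number of induced 3-vertex directed paths. -/
def p3Count (n : ℕ) (E : Fin n → Fin n → Prop) [DecidableRel E] : ℕ :=
  ((Finset.univ : Finset (Fin n × Fin n × Fin n)).filter
    (fun p => InducedP3 E p.1 p.2.1 p.2.2)).card

/-- The number of directed 4-vertex paths. -/
def p4Count (n : ℕ) (E : Fin n → Fin n → Prop) [DecidableRel E] : ℕ :=
  ((Finset.univ : Finset (Fin n × Fin n × Fin n × Fin n)).filter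
    (fun p => IsPath4 E p.1 p.2.1 p.2.2.1 p.2.2.2)).card

/-- `S`: the number of ordered 4-tuples of distinct vertices whose vertex set carries a
directed 4-cycle; equal to 24 times the number of directed 4-cycles of `G`. -/
def sCount (n : ℕ) (E : Fin n → Fin n → Prop) [DecidableRel E] : ℕ :=
  ((Finset.univ : Finset (Fin n × Fin n × Fin n × Fin n)).filter
    (fun p => p.1 ≠ p.2.1 ∧ p.1 ≠ p.2.2.1 ∧ p.1 ≠ p.2.2.2 ∧ p.2.1 ≠ p.2.2.1 ∧
      p.2.1 ≠ p.2.2.2 ∧ p.2.2.1 ≠ p.2.2.2 ∧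
      ∃ w x y z : Fin n, IsCycle4 E w x y z ∧
        ({w, x, y, z} : Finset (Fin n)) = {p.1, p.2.1, p.2.2.1, p.2.2.2})).card

/-- `|N|`: the number of ordered 4-tuples of vertices (repetitions allowed) whose vertex
set is not the vertex set of any directed 4-vertex path. -/
def nCount (n : ℕ) (E : Fin n → Fin n → Prop) [DecidableRel E] : ℕ :=
  ((Finset.univ : Finset (Fin n × Fin n × Fin n × Fin n)).filter
    (fun p => ¬ ∃ w x y z : Fin n, IsPath4 E w x y z ∧
        ({w, x, y, z} : Finset (Fin n)) = {p.1, p.2.1, p.2.2.1, p.2.2.2})).card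

/-
For an ordered 4-cycle `u → x → v → z → u`, let `A` be the set of vertices `y` with `x → y → z` and
`B` the set of `y` with `z → y → x`. In a 3-free digraph `A` and `B` are disjoint, there is no edge
between them, and `v ∈ A`, `u ∈ B`; hence no tuple `(u, p, v, q)` with `p, q ∈ A ∪ B` carries a
4-path. Together with the tuples having a repeated vertex, this gives at least `4 |A| |B|` tuples of
`N` of the shape `(u, _, v, _)`, and `|A| |B|` is exactly the number `c(x, z)` of ordered 4-cycles
`(x, _, z, _)`. Sharing the tuples `(u, _, v, _)` among the `c(u, v)` cycles `(u, _, v, _)`, each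
ordered 4-cycle gets a share of at least `4 c(x, z) / c(u, v)`; summing over all ordered cycles and
pairing every cycle with its rotation (`c(x, z) / c(u, v) + c(u, v) / c(x, z) ≥ 2`) gives
`|N| ≥ 4 C`, where `C` is the number of ordered 4-cycles. Finally every tuple counted by `S` is a
reordering, fixing the first vertex, of one of the `C` ordered cycles, so `S ≤ 6 C`.
-/

open Finset

theorem card_le_sum_apply_div {ι K : Type*} [Field K] [LinearOrder K] [IsStrictOrderedRing K]
    (s : Finset ι) (σ : ι ≃ ι) (hσ : ∀ i, σ i ∈ s ↔ i ∈ s) (g : ι → K)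
    (hg : ∀ i ∈ s, 0 < g i) (hσσ : ∀ i, g (σ (σ i)) = g i) :
    (#s : K) ≤ ∑ i ∈ s, g (σ i) / g i := by
  have hswap : ∑ i ∈ s, g i / g (σ i) = ∑ i ∈ s, g (σ i) / g i :=
    sum_equiv σ (fun i => (hσ i).symm) fun i _ => by rw [hσσ]
  have hpair : ∀ i ∈ s, 2 ≤ g (σ i) / g i + g i / g (σ i) := by
    intro i hi
    have ha := hg i hi
    have hb := hg (σ i) ((hσ i).2 hi)
    rw [div_add_div _ _ ha.ne' hb.ne', le_div_iff₀ (mul_pos ha hb)]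
    nlinarith [sq_nonneg (g (σ i) - g i)]
  have := sum_le_sum hpair
  rw [sum_add_distrib, hswap, sum_const, nsmul_eq_mul] at this
  linarith

section Paths

variable {V : Type*} [DecidableEq V] (E : V → V → Prop)

theorem card_quad_eq_four_iff {a b c d : V} :
    #({a, b, c, d} : Finset V) = 4 ↔ a ≠ b ∧ a ≠ c ∧ a ≠ d ∧ b ≠ c ∧ b ≠ d ∧ c ≠ d := by
  simp only [card_insert_eq_ite, mem_insert, mem_singleton, card_singleton]
  split_ifs <;> simp_all <;> tauto

def CarriesPath4 (s : Finset V) : Prop :=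
  ∃ w x y z, IsPath4 E w x y z ∧ ({w, x, y, z} : Finset V) = s

def CarriesCycle4 (s : Finset V) : Prop :=
  ∃ w x y z, IsCycle4 E w x y z ∧ ({w, x, y, z} : Finset V) = s

instance [Fintype V] [DecidableRel E] (s : Finset V) : Decidable (CarriesPath4 E s) :=
  inferInstanceAs (Decidable (∃ w x y z, IsPath4 E w x y z ∧ ({w, x, y, z} : Finset V) = s))

instance [Fintype V] [DecidableRel E] (s : Finset V) : Decidable (CarriesCycle4 E s) :=
  inferInstanceAs (Decidable (∃ w x y z, IsCycle4 E w x y z ∧ ({w, x, y, z} : Finset V) = s))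

variable {E}

theorem CarriesPath4.card_eq {s : Finset V} (hs : CarriesPath4 E s) : #s = 4 := by
  obtain ⟨w, x, y, z, ⟨hwx, hwy, hwz, hxy, hxz, hyz, -⟩, rfl⟩ := hs
  exact card_quad_eq_four_iff.2 ⟨hwx, hwy, hwz, hxy, hxz, hyz⟩

theorem CarriesPath4.mem_iff_mem {s : Finset V} (hs : CarriesPath4 E s) (P : Set V)
    (hP : ∀ a ∈ s, ∀ b ∈ s, E a b → (a ∈ P ↔ b ∈ P)) {a b : V} (ha : a ∈ s) (hb : b ∈ s) :
    a ∈ P ↔ b ∈ P := by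
  obtain ⟨w, x, y, z, ⟨-, -, -, -, -, -, hwx, hxy, hyz⟩, rfl⟩ := hs
  have hw : ∀ c ∈ ({w, x, y, z} : Finset V), c ∈ P ↔ w ∈ P := by
    have h₁ := hP w (by simp) x (by simp) hwx
    have h₂ := hP x (by simp) y (by simp) hxy
    have h₃ := hP y (by simp) z (by simp) hyz
    simp only [mem_insert, mem_singleton]
    rintro c (rfl | rfl | rfl | rfl) <;> tauto
  rw [hw a ha, hw b hb]

end Paths

namespace ThreeFree

variable {V : Type*} {E : V → V → Prop}

theorem asymm (h : ThreeFree E) {a b : V} (hab : E a b) : ¬E b a :=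
  fun hba => h.2.1 a b ⟨hab, hba⟩

theorem not_adj_of_path (h : ThreeFree E) {a b c : V} (hab : E a b) (hbc : E b c) : ¬E c a :=
  fun hca => h.2.2 a b c ⟨hab, hbc, hca⟩

end ThreeFree

section MidVertices

variable {V : Type*} [Fintype V] (E : V → V → Prop) [DecidableRel E]

def midVertices (a b : V) : Finset V := {y | E a y ∧ E y b}

def cycleCount (u v : V) : ℕ := #(midVertices E u v) * #(midVertices E v u)

variable {E}

@[simp]
theorem mem_midVertices {a b y : V} : y ∈ midVertices E a b ↔ E a y ∧ E y b := by
  simp [midVertices]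

theorem cycleCount_comm (u v : V) : cycleCount E u v = cycleCount E v u :=
  Nat.mul_comm _ _

namespace ThreeFree

theorem disjoint_midVertices (h : ThreeFree E) (a b : V) :
    Disjoint (midVertices E a b) (midVertices E b a) :=
  disjoint_left.2 fun _ hab hba => h.asymm (mem_midVertices.1 hab).1 (mem_midVertices.1 hba).2

theorem not_adj_of_mem_midVertices (h : ThreeFree E) {a b p q : V}
    (hp : p ∈ midVertices E b a) (hq : q ∈ midVertices E a b) : ¬E p q ∧ ¬E q p := by
  rw [mem_midVertices] at hp hq
  exact ⟨fun hpq => h.not_adj_of_path hpq hq.2 hp.1, fun hqp => h.not_adj_of_path hqp hp.2 hq.1⟩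

theorem card_midVertices_add_card_add_two_le [DecidableEq V] (h : ThreeFree E) {a b : V}
    (hab : a ≠ b) : #(midVertices E a b) + #(midVertices E b a) + 2 ≤ Fintype.card V := by
  have hsub : midVertices E a b ∪ midVertices E b a ⊆ (univ.erase a).erase b := by
    intro y hy
    have hya : y ≠ a := by rintro rfl; simp_all [h.1 y]
    have hyb : y ≠ b := by rintro rfl; simp_all [h.1 y]
    simp [hya, hyb]
  have := card_le_card hsub
  rw [card_union_of_disjoint (h.disjoint_midVertices a b),
    card_erase_of_mem (by simpa using hab.symm), card_erase_of_mem (mem_univ a), card_univ] at this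
  have : 1 < Fintype.card V := Fintype.one_lt_card_iff.2 ⟨a, b, hab⟩
  omega

end ThreeFree

end MidVertices

section Anchored

variable {V : Type*} [Fintype V] [DecidableEq V] {E : V → V → Prop} [DecidableRel E]

variable (E) in
def anchored (u v : V) : Finset (V × V) := {pq | ¬CarriesPath4 E {u, pq.1, v, pq.2}}

theorem ThreeFree.not_carriesPath4_of_mem_midVertices (h : ThreeFree E) {u x v z p q : V}
    (hux : E u x) (hxv : E x v) (hvz : E v z) (hzu : E z u)
    (hp : p ∈ midVertices E x z ∪ midVertices E z x)
    (hq : q ∈ midVertices E x z ∪ midVertices E z x) :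
    ¬CarriesPath4 E {u, p, v, q} := by
  set A := midVertices E x z
  set B := midVertices E z x
  have hAB := h.disjoint_midVertices x z
  have hu : u ∈ B := mem_midVertices.2 ⟨hzu, hux⟩
  have hv : v ∈ A := mem_midVertices.2 ⟨hxv, hvz⟩
  have hsub : ({u, p, v, q} : Finset V) ⊆ A ∪ B := by
    simp only [insert_subset_iff, singleton_subset_iff]
    exact ⟨mem_union_right _ hu, hp, mem_union_left _ hv, hq⟩
  -- no edge joins `A` and `B`, so a 4-path inside `A ∪ B` stays in one of them,
  -- while `u ∈ B` and `v ∈ A`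
  have hB : ∀ a ∈ ({u, p, v, q} : Finset V), ∀ b ∈ ({u, p, v, q} : Finset V),
      E a b → (a ∈ (B : Set V) ↔ b ∈ (B : Set V)) := by
    intro a ha b hb hab
    rcases mem_union.1 (hsub ha) with haA | haB <;> rcases mem_union.1 (hsub hb) with hbA | hbB
    · exact iff_of_false (disjoint_left.1 hAB haA) (disjoint_left.1 hAB hbA)
    · exact absurd hab (h.not_adj_of_mem_midVertices hbB haA).2
    · exact absurd hab (h.not_adj_of_mem_midVertices haB hbA).1
    · exact iff_of_true haB hbB
  intro hs
  have hvB := (hs.mem_iff_mem B hB (by simp) (by simp : v ∈ _)).1 hu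
  exact disjoint_left.1 hAB hv hvB

theorem ThreeFree.subset_anchored (h : ThreeFree E) {u x v z : V}
    (hux : E u x) (hxv : E x v) (hvz : E v z) (hzu : E z u) :
    (univ \ ((univ.erase u).erase v).offDiag) ∪
        (((midVertices E x z ∪ midVertices E z x).erase u).erase v).offDiag ⊆
      anchored E u v := by
  rintro ⟨p, q⟩ hpq
  simp only [anchored, mem_filter, mem_univ, true_and]
  rcases mem_union.1 hpq with hpq | hpq
  · intro hs
    obtain ⟨hup, -, huq, hpv, hpq', hvq⟩ := card_quad_eq_four_iff.1 hs.card_eq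
    simp_all [Ne.symm hup, Ne.symm huq]
  · simp only [mem_offDiag, mem_erase] at hpq
    exact h.not_carriesPath4_of_mem_midVertices hux hxv hvz hzu hpq.1.2.2 hpq.2.1.2.2

theorem ThreeFree.four_mul_cycleCount_le_card_anchored (h : ThreeFree E) {u x v z : V}
    (hux : E u x) (hxv : E x v) (hvz : E v z) (hzu : E z u) :
    4 * cycleCount E x z ≤ #(anchored E u v) := by
  set A := midVertices E x z
  set B := midVertices E z x
  set U : Finset V := (univ.erase u).erase v
  set W : Finset V := ((A ∪ B).erase u).erase v
  have hAB : Disjoint A B := h.disjoint_midVertices x z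
  have huv : u ≠ v := by rintro rfl; exact h.asymm hux hxv
  have hu : u ∈ B := mem_midVertices.2 ⟨hzu, hux⟩
  have hv : v ∈ A := mem_midVertices.2 ⟨hxv, hvz⟩
  have hWU : W ⊆ U := erase_subset_erase _ (erase_subset_erase _ (subset_univ _))
  have hcard := card_le_card (h.subset_anchored hux hxv hvz hzu)
  rw [card_union_of_disjoint (disjoint_sdiff_self_left.mono_right (offDiag_mono hWU))] at hcard
  have hsplit := card_sdiff_add_card_eq_card (subset_univ U.offDiag)
  rw [card_univ, Fintype.card_prod] at hsplit
  have hcardU : #U + 2 = Fintype.card V := by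
    rw [card_erase_of_mem (mem_erase.2 ⟨huv.symm, mem_univ v⟩), card_erase_of_mem (mem_univ u),
      card_univ]
    have := Fintype.one_lt_card_iff.2 ⟨u, v, huv⟩
    omega
  have hcardW : #W + 2 = #A + #B := by
    rw [card_erase_of_mem (mem_erase.2 ⟨huv.symm, mem_union_left _ hv⟩),
      card_erase_of_mem (mem_union_right _ hu), card_union_of_disjoint hAB]
    have := card_pos.2 ⟨u, hu⟩
    have := card_pos.2 ⟨v, hv⟩
    omega
  have hN : #A + #B + 2 ≤ Fintype.card V :=
    h.card_midVertices_add_card_add_two_le fun hxz => h.asymm hxv (hxz ▸ hvz)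
  have hU := offDiag_card U ▸ Nat.sub_add_cancel (Nat.le_mul_self #U)
  have hW := offDiag_card W ▸ Nat.sub_add_cancel (Nat.le_mul_self #W)
  rw [← hcardU] at hsplit hN
  -- with `n = |V|` and `m = |A| + |B| ≤ n - 2`, the bound reads
  -- `(5 n - 6) + (m - 2) (m - 3) ≥ m ^ 2 + 10 ≥ 4 |A| |B|`
  show 4 * (#A * #B) ≤ _
  nlinarith [sq_nonneg ((#A : ℤ) - #B)]

end Anchored

section Cycles

variable {V : Type*} {E : V → V → Prop}

theorem IsCycle4.rotate {w x y z : V} (h : IsCycle4 E w x y z) : IsCycle4 E x y z w := by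
  obtain ⟨h₁, h₂, h₃, h₄, h₅, h₆, e₁, e₂, e₃, e₄⟩ := h
  exact ⟨h₄, h₅, h₁.symm, h₆, h₂.symm, h₃.symm, e₂, e₃, e₄, e₁⟩

theorem ThreeFree.isCycle4_iff (h : ThreeFree E) {u x v z : V} :
    IsCycle4 E u x v z ↔ E u x ∧ E x v ∧ E v z ∧ E z u := by
  refine ⟨fun hc => hc.2.2.2.2.2.2, fun ⟨hux, hxv, hvz, hzu⟩ =>
    ⟨?_, ?_, ?_, ?_, ?_, ?_, hux, hxv, hvz, hzu⟩⟩
  · rintro rfl; exact h.1 u hux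
  · rintro rfl; exact h.asymm hux hxv
  · rintro rfl; exact h.1 u hzu
  · rintro rfl; exact h.1 x hxv
  · rintro rfl; exact h.asymm hxv hvz
  · rintro rfl; exact h.1 v hvz

variable (V) in
def rotate4 : V × V × V × V ≃ V × V × V × V where
  toFun ρ := (ρ.2.1, ρ.2.2.1, ρ.2.2.2, ρ.1)
  invFun ρ := (ρ.2.2.2, ρ.1, ρ.2.1, ρ.2.2.1)
  left_inv _ := rfl
  right_inv _ := rfl

variable [Fintype V] [DecidableEq V] [DecidableRel E]

variable (E) in
def cycles4 : Finset (V × V × V × V) := {ρ | IsCycle4 E ρ.1 ρ.2.1 ρ.2.2.1 ρ.2.2.2}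

@[simp]
theorem mem_cycles4 {ρ : V × V × V × V} :
    ρ ∈ cycles4 E ↔ IsCycle4 E ρ.1 ρ.2.1 ρ.2.2.1 ρ.2.2.2 := by
  simp [cycles4]

theorem rotate4_mem_cycles4 {ρ : V × V × V × V} : rotate4 V ρ ∈ cycles4 E ↔ ρ ∈ cycles4 E := by
  rw [mem_cycles4, mem_cycles4]
  exact ⟨fun h => h.rotate.rotate.rotate, IsCycle4.rotate⟩

theorem cycleCount_pos {ρ : V × V × V × V} (hρ : ρ ∈ cycles4 E) :
    0 < cycleCount E ρ.1 ρ.2.2.1 := by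
  obtain ⟨-, -, -, -, -, -, e₁, e₂, e₃, e₄⟩ := mem_cycles4.1 hρ
  exact Nat.mul_pos (card_pos.2 ⟨_, mem_midVertices.2 ⟨e₁, e₂⟩⟩)
    (card_pos.2 ⟨_, mem_midVertices.2 ⟨e₃, e₄⟩⟩)

theorem ThreeFree.card_cycles4_filter_diag (h : ThreeFree E) (d : V × V) :
    #{ρ ∈ cycles4 E | (ρ.1, ρ.2.2.1) = d} = cycleCount E d.1 d.2 := by
  obtain ⟨u, v⟩ := d
  rw [cycleCount, ← card_product]
  refine card_nbij' (fun ρ => (ρ.2.1, ρ.2.2.2)) (fun p => (u, p.1, v, p.2)) ?_ ?_ ?_ ?_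
  · rintro ⟨u', x, v', z⟩ hρ
    simp only [coe_filter, mem_cycles4, h.isCycle4_iff, Set.mem_ofPred_eq, Prod.mk.injEq] at hρ
    obtain ⟨⟨hux, hxv, hvz, hzu⟩, rfl, rfl⟩ := hρ
    simp [hux, hxv, hvz, hzu]
  · rintro ⟨x, z⟩ hxz
    simp_all [h.isCycle4_iff]
  · rintro ⟨u', x, v', z⟩ hρ
    simp_all
  · intro p _
    rfl

end Cycles

section Counting

variable {V : Type*} [Fintype V] [DecidableEq V] {E : V → V → Prop} [DecidableRel E]

theorem sum_card_anchored_le (D : Finset (V × V)) :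
    ∑ d ∈ D, #(anchored E d.1 d.2) ≤
      #{p : V × V × V × V | ¬CarriesPath4 E {p.1, p.2.1, p.2.2.1, p.2.2.2}} := by
  rw [← card_sigma]
  refine card_le_card_of_injOn (fun x => (x.1.1, x.2.1, x.1.2, x.2.2)) ?_ ?_
  · rintro ⟨⟨u, v⟩, ⟨p, q⟩⟩ hx
    simpa [anchored] using (mem_sigma.1 hx).2
  · rintro ⟨⟨u, v⟩, ⟨p, q⟩⟩ - ⟨⟨u', v'⟩, ⟨p', q'⟩⟩ - hx
    simp only [Prod.mk.injEq] at hx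
    obtain ⟨rfl, rfl, rfl, rfl⟩ := hx
    rfl

theorem ThreeFree.sum_card_anchored_div_le (h : ThreeFree E) :
    ∑ ρ ∈ cycles4 E, (#(anchored E ρ.1 ρ.2.2.1) : ℚ) / cycleCount E ρ.1 ρ.2.2.1 ≤
      #{p : V × V × V × V | ¬CarriesPath4 E {p.1, p.2.1, p.2.2.1, p.2.2.2}} := by
  calc _ = ∑ d ∈ (cycles4 E).image (fun ρ => (ρ.1, ρ.2.2.1)),
        #{ρ ∈ cycles4 E | (ρ.1, ρ.2.2.1) = d} •
          ((#(anchored E d.1 d.2) : ℚ) / cycleCount E d.1 d.2) := sum_comp _ _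
    _ = ∑ d ∈ (cycles4 E).image (fun ρ => (ρ.1, ρ.2.2.1)), (#(anchored E d.1 d.2) : ℚ) := by
        refine sum_congr rfl fun d hd => ?_
        obtain ⟨ρ, hρ, rfl⟩ := mem_image.1 hd
        rw [h.card_cycles4_filter_diag, nsmul_eq_mul, mul_div_cancel₀]
        exact_mod_cast (cycleCount_pos hρ).ne'
    _ ≤ _ := by exact_mod_cast sum_card_anchored_le _

theorem ThreeFree.four_mul_card_cycles4_le (h : ThreeFree E) :
    4 * (#(cycles4 E) : ℚ) ≤
      ∑ ρ ∈ cycles4 E, (#(anchored E ρ.1 ρ.2.2.1) : ℚ) / cycleCount E ρ.1 ρ.2.2.1 := by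
  let g : V × V × V × V → ℚ := fun ρ => cycleCount E ρ.1 ρ.2.2.1
  have hg : ∀ ρ ∈ cycles4 E, 0 < g ρ := fun ρ hρ => Nat.cast_pos.2 (cycleCount_pos hρ)
  calc 4 * (#(cycles4 E) : ℚ) ≤ 4 * ∑ ρ ∈ cycles4 E, g (rotate4 V ρ) / g ρ := by
        gcongr
        exact card_le_sum_apply_div _ _ (fun _ => rotate4_mem_cycles4) g hg
          fun _ => congrArg Nat.cast (cycleCount_comm _ _)
    _ = ∑ ρ ∈ cycles4 E, 4 * g (rotate4 V ρ) / g ρ := by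
        rw [mul_sum]
        simp_rw [mul_div_assoc]
    _ ≤ _ := by
        refine sum_le_sum fun ρ hρ => div_le_div_of_nonneg_right ?_ (hg ρ hρ).le
        obtain ⟨u, x, v, z⟩ := ρ
        obtain ⟨-, -, -, -, -, -, hux, hxv, hvz, hzu⟩ := mem_cycles4.1 hρ
        show (4 : ℚ) * (cycleCount E x z : ℚ) ≤ _
        exact_mod_cast h.four_mul_cycleCount_le_card_anchored hux hxv hvz hzu

theorem exists_mem_cycles4_fst_eq {w x y z a : V} (hc : IsCycle4 E w x y z)
    (ha : a ∈ ({w, x, y, z} : Finset V)) :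
    ∃ ρ ∈ cycles4 E, ρ.1 = a ∧
      ({ρ.1, ρ.2.1, ρ.2.2.1, ρ.2.2.2} : Finset V) = {w, x, y, z} := by
  simp only [mem_insert, mem_singleton] at ha
  rcases ha with rfl | rfl | rfl | rfl
  · exact ⟨(a, x, y, z), mem_cycles4.2 hc, rfl, rfl⟩
  · refine ⟨(a, y, z, w), mem_cycles4.2 hc.rotate, rfl, ?_⟩
    ext; simp only [mem_insert, mem_singleton]; tauto
  · refine ⟨(a, z, w, x), mem_cycles4.2 hc.rotate.rotate, rfl, ?_⟩
    ext; simp only [mem_insert, mem_singleton]; tauto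
  · refine ⟨(a, w, x, y), mem_cycles4.2 hc.rotate.rotate.rotate, rfl, ?_⟩
    ext; simp only [mem_insert, mem_singleton]; tauto

theorem card_filter_fst_eq_le_six {a b c d : V} (hd : #({a, b, c, d} : Finset V) = 4) :
    #{t : V × V × V × V | t.1 = a ∧
      ({t.1, t.2.1, t.2.2.1, t.2.2.2} : Finset V) = {a, b, c, d}} ≤ 6 := by
  set X : Finset V := {a, b, c, d}
  have hX : #(X.erase a).offDiag = 6 := by
    rw [offDiag_card, card_erase_of_mem (by simp [X]), hd]
  refine hX ▸ card_le_card_of_injOn (fun t => (t.2.1, t.2.2.1)) ?_ ?_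
  · rintro ⟨t₁, t₂, t₃, t₄⟩ ht
    simp only [coe_filter, mem_univ, true_and, Set.mem_ofPred_eq] at ht
    obtain ⟨rfl, hset⟩ := ht
    obtain ⟨h₁₂, h₁₃, -, h₂₃, -, -⟩ := card_quad_eq_four_iff.1 (hset ▸ hd)
    simp only [coe_offDiag, Set.mem_offDiag, mem_coe, mem_erase, ← hset]
    simp [h₁₂.symm, h₁₃.symm, h₂₃]
  · rintro ⟨t₁, t₂, t₃, t₄⟩ ht ⟨s₁, s₂, s₃, s₄⟩ hs hts
    simp only [coe_filter, mem_univ, true_and, Set.mem_ofPred_eq] at ht hs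
    obtain ⟨h₁, hset⟩ := ht
    obtain ⟨h₁', hset'⟩ := hs
    obtain ⟨h₂, h₃⟩ := Prod.mk.inj hts
    obtain ⟨-, -, h₁₄, -, h₂₄, h₃₄⟩ := card_quad_eq_four_iff.1 (hset ▸ hd)
    have h₄ : t₄ ∈ ({s₁, s₂, s₃, s₄} : Finset V) := hset' ▸ hset ▸ by simp
    simp only [mem_insert, mem_singleton] at h₄
    grind

theorem card_filter_carriesCycle4_le :
    #{p : V × V × V × V | CarriesCycle4 E {p.1, p.2.1, p.2.2.1, p.2.2.2}} ≤ 6 * #(cycles4 E) := by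
  rw [← mul_one #{p : V × V × V × V | _}, mul_comm 6]
  refine card_mul_le_card_mul (fun t ρ => ρ.1 = t.1 ∧
    ({ρ.1, ρ.2.1, ρ.2.2.1, ρ.2.2.2} : Finset V) = {t.1, t.2.1, t.2.2.1, t.2.2.2}) ?_ ?_
  · intro t ht
    obtain ⟨w, x, y, z, hc, hset⟩ := (mem_filter.1 ht).2
    obtain ⟨ρ, hρ, h₁, hρset⟩ := exists_mem_cycles4_fst_eq hc (a := t.1) (hset ▸ by simp)
    exact card_pos.2 ⟨ρ, mem_filter.2 ⟨hρ, h₁, hρset.trans hset⟩⟩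
  · rintro ⟨a, b, c, d⟩ hρ
    obtain ⟨h₁, h₂, h₃, h₄, h₅, h₆, -⟩ := mem_cycles4.1 hρ
    refine (card_le_card fun t ht => ?_).trans
      (card_filter_fst_eq_le_six (card_quad_eq_four_iff.2 ⟨h₁, h₂, h₃, h₄, h₅, h₆⟩))
    simp only [bipartiteBelow, mem_filter] at ht ⊢
    exact ⟨mem_univ _, ht.2.1.symm, ht.2.2.symm⟩

end Counting

theorem nCount_ge (n : ℕ) (E : Fin n → Fin n → Prop) [DecidableRel E]
    (h3 : ThreeFree E) :
    (2 : ℚ) / 3 * (sCount n E : ℚ) ≤ (nCount n E : ℚ) := by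
  -- `sCount` and `nCount` filter with other `Decidable` instances, so compare them by membership
  have hS : sCount n E ≤ 6 * #(cycles4 E) :=
    (card_le_card fun p hp => mem_filter.2 ⟨mem_univ _, (mem_filter.1 hp).2.2.2.2.2.2.2⟩).trans
      card_filter_carriesCycle4_le
  have hN : #{p : Fin n × Fin n × Fin n × Fin n |
      ¬CarriesPath4 E {p.1, p.2.1, p.2.2.1, p.2.2.2}} ≤ nCount n E :=
    card_le_card fun p hp => mem_filter.2 ⟨mem_univ _, (mem_filter.1 hp).2⟩
  calc (2 : ℚ) / 3 * sCount n E ≤ 4 * #(cycles4 E) := by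
        have : (sCount n E : ℚ) ≤ 6 * #(cycles4 E) := by exact_mod_cast hS
        linarith
    _ ≤ _ := h3.four_mul_card_cycles4_le
    _ ≤ _ := h3.sum_card_anchored_div_le
    _ ≤ nCount n E := by exact_mod_cast hN
end

section
/- Let G be a 2-free circular interval digraph on n ≥ 4 vertices maximizing the number of induced 3-vertex directed paths among all such digraphs on n vertices (and, among these, minimizing ξ(G), the number of pairs (edge uv, non-edge wx) with d(u,v) > d(w,x)). Then the maximum edge length β_G satisfies β_G < n/2. -/
/-- A digraph (given by its edge relation) is 2-free: no loops and no 2-cycles. -/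
def TwoFree {V : Type*} (E : V → V → Prop) : Prop :=
  (∀ v, ¬ E v v) ∧ ∀ u v, ¬ (E u v ∧ E v u)

/-- The clockwise circular distance (the "length" of the pair `(u,v)`) on `Fin n`. -/
def cdist (n : ℕ) (u v : Fin n) : ℕ := ((v : ℕ) + n - (u : ℕ)) % n

/-- `E` is a circular interval digraph with respect to the standard circular order of
`Fin n`: whenever `u, v, w` are distinct and in clockwise order (i.e. `v` lies strictly
between `u` and `w` clockwise) and `u → w` is an edge, then `u → v` and `v → w` are edges. -/
def CircInterval (n : ℕ) (E : Fin n → Fin n → Prop) : Prop :=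
  ∀ u v w : Fin n, u ≠ v → v ≠ w → u ≠ w →
    cdist n u v < cdist n u w → E u w → E u v ∧ E v w

/-- `ξ(G)`: the number of pairs (edge `uv`, non-edge `wx`) with `d(u,v) > d(w,x)`. -/
def xiCount (n : ℕ) (E : Fin n → Fin n → Prop) [DecidableRel E] : ℕ :=
  ((Finset.univ : Finset (Fin n × Fin n × Fin n × Fin n)).filter
    (fun p => E p.1 p.2.1 ∧ p.2.2.1 ≠ p.2.2.2 ∧ ¬ E p.2.2.1 p.2.2.2 ∧
      ¬ E p.2.2.2 p.2.2.1 ∧ cdist n p.2.2.1 p.2.2.2 < cdist n p.1 p.2.1)).card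

/-- `E` is optimal: it is a 2-free circular interval digraph on `n` vertices maximizing
the number of induced 3-vertex paths, and subject to that minimizing `ξ`. -/
def Optimal (n : ℕ) (E : Fin n → Fin n → Prop) [DecidableRel E] : Prop :=
  TwoFree E ∧ CircInterval n E ∧
    ∀ (F : Fin n → Fin n → Prop) (instF : DecidableRel F), TwoFree F → CircInterval n F →
      @p3Count n F instF ≤ p3Count n E ∧
        (@p3Count n F instF = p3Count n E → xiCount n E ≤ @xiCount n F instF)

/-! Delete a longest edge `uw`, of length `β`; the result is still 2-free and circular interval.
The induced paths lost are those through `uw`: `(u,w,x)` with `x` not adjacent to `u`, and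
`(y,u,w)` with `y → u`. Both `x` and `y` lie more than `β` clockwise from `u` (a shorter chord from
`u` would be an edge), and no vertex plays both roles, so at most `n - β - 1` paths are lost. The
`β - 1` paths `(u,x,w)` with `x` strictly inside the arc from `u` to `w` are gained. So if `2β ≥ n`,
optimality forces `2β = n` and an unchanged count. Then the new non-edge `{u,w}` is at least as long
as every remaining edge, while the pair (`uw`, a non-edge shorter than `β`, found next to a lost
path) disappears, so `ξ` drops. -/

open Finset

section Cdist

variable {n : ℕ}

theorem cdist_eq_val_sub (u v : Fin n) : cdist n u v = ((v - u : Fin n) : ℕ) := by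
  rw [cdist, Fin.val_sub]
  congr 1
  have := u.isLt
  omega

theorem cdist_lt (u v : Fin n) : cdist n u v < n := by
  rw [cdist_eq_val_sub]
  exact Fin.is_lt _

variable [NeZero n]

theorem cdist_eq_zero_iff {u v : Fin n} : cdist n u v = 0 ↔ u = v := by
  rw [cdist_eq_val_sub, Fin.val_eq_zero_iff, sub_eq_zero, eq_comm]

theorem cdist_right_injective (u : Fin n) : Function.Injective (cdist n u) := fun v w h => by
  rw [cdist_eq_val_sub, cdist_eq_val_sub] at h
  exact sub_left_injective (Fin.val_injective h)

theorem cdist_self_add (u t : Fin n) : cdist n u (u + t) = t := by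
  rw [cdist_eq_val_sub, add_sub_cancel_left]

theorem cdist_add_cdist_swap {u v : Fin n} (h : u ≠ v) : cdist n u v + cdist n v u = n := by
  have hvu : v - u ≠ 0 := sub_ne_zero.mpr h.symm
  rw [cdist_eq_val_sub, cdist_eq_val_sub, ← neg_sub v u, Fin.val_neg, if_neg hvu]
  have := (v - u).isLt
  omega

theorem cdist_add_cdist_of_lt {u v w : Fin n} (h : cdist n u v < cdist n u w) :
    cdist n u v + cdist n v w = cdist n u w := by
  rw [cdist_eq_val_sub, cdist_eq_val_sub] at h ⊢
  rw [cdist_eq_val_sub, ← sub_sub_sub_cancel_right w v u,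
    Fin.sub_val_of_le (Fin.le_iff_val_le_val.mpr h.le)]
  omega

theorem card_filter_cdist_mem_Ioo (u : Fin n) {a b : ℕ} (hb : b ≤ n) :
    #{x | cdist n u x ∈ Ioo a b} = b - a - 1 := by
  rw [← Nat.card_Ioo]
  refine card_nbij (cdist n u) (fun x hx => (mem_filter.mp hx).2)
    (fun x _ y _ h => cdist_right_injective u h) fun k hk => ?_
  have hkn : k < n := (mem_Ioo.mp hk).2.trans_le hb
  exact ⟨u + ⟨k, hkn⟩, by simpa [cdist_self_add] using hk, cdist_self_add u _⟩

end Cdist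

def deleteEdge {V : Type*} (E : V → V → Prop) (u w : V) (a b : V) : Prop :=
  E a b ∧ ¬(a = u ∧ b = w)

instance {V : Type*} [DecidableEq V] (E : V → V → Prop) [DecidableRel E] (u w : V) :
    DecidableRel (deleteEdge E u w) :=
  fun a b => inferInstanceAs (Decidable (E a b ∧ ¬(a = u ∧ b = w)))

theorem TwoFree.deleteEdge {V : Type*} {E : V → V → Prop} (h : TwoFree E) (u w : V) :
    TwoFree (deleteEdge E u w) :=
  ⟨fun v hv => h.1 v hv.1, fun a b hab => h.2 a b ⟨hab.1.1, hab.2.1⟩⟩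

theorem InducedP3.deleteEdge {V : Type*} {E : V → V → Prop} {a b c u w : V}
    (h : InducedP3 E a b c) (hab : ¬(a = u ∧ b = w)) (hbc : ¬(b = u ∧ c = w)) :
    InducedP3 (deleteEdge E u w) a b c := by
  obtain ⟨h1, h2, h3, h4, h5, h6, h7, h8, h9⟩ := h
  exact ⟨h1, h2, h3, ⟨h4, hab⟩, ⟨h5, hbc⟩, fun h => h6 h.1, fun h => h7 h.1, fun h => h8 h.1,
    fun h => h9 h.1⟩

def IsLongestEdge (n : ℕ) (E : Fin n → Fin n → Prop) (u w : Fin n) : Prop :=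
  E u w ∧ ∀ a b, E a b → cdist n a b ≤ cdist n u w

theorem exists_isLongestEdge {n : ℕ} {E : Fin n → Fin n → Prop} (h : ∃ a b, E a b) :
    ∃ u w, IsLongestEdge n E u w := by
  classical
  obtain ⟨a, b, hab⟩ := h
  obtain ⟨⟨u, w⟩, huw, hmax⟩ := ({p : Fin n × Fin n | E p.1 p.2} : Finset _).exists_max_image
    (fun p => cdist n p.1 p.2) ⟨(a, b), by simpa using hab⟩
  exact ⟨u, w, (mem_filter.mp huw).2, fun a b hab => hmax (a, b) (by simpa using hab)⟩

def p3Set (n : ℕ) (E : Fin n → Fin n → Prop) [DecidableRel E] : Finset (Fin n × Fin n × Fin n) :=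
  {p | InducedP3 E p.1 p.2.1 p.2.2}

def xiSet (n : ℕ) (E : Fin n → Fin n → Prop) [DecidableRel E] :
    Finset (Fin n × Fin n × Fin n × Fin n) :=
  {p | E p.1 p.2.1 ∧ p.2.2.1 ≠ p.2.2.2 ∧ ¬ E p.2.2.1 p.2.2.2 ∧
      ¬ E p.2.2.2 p.2.2.1 ∧ cdist n p.2.2.1 p.2.2.2 < cdist n p.1 p.2.1}

theorem mem_p3Set_sdiff_deleteEdge {n : ℕ} {E : Fin n → Fin n → Prop} [DecidableRel E]
    {u w : Fin n} {p : Fin n × Fin n × Fin n}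
    (hp : p ∈ p3Set n E \ p3Set n (deleteEdge E u w)) :
    (∃ x, p = (u, w, x) ∧ InducedP3 E u w x) ∨ (∃ y, p = (y, u, w) ∧ InducedP3 E y u w) := by
  obtain ⟨a, b, c⟩ := p
  simp only [p3Set, mem_sdiff, mem_filter, mem_univ, true_and] at hp
  by_cases hab : a = u ∧ b = w
  · obtain ⟨rfl, rfl⟩ := hab
    exact .inl ⟨c, rfl, hp.1⟩
  by_cases hbc : b = u ∧ c = w
  · obtain ⟨rfl, rfl⟩ := hbc
    exact .inr ⟨a, rfl, hp.1⟩
  exact absurd (hp.1.deleteEdge hab hbc) hp.2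

theorem p3Count_eq_card_p3Set (n : ℕ) (E : Fin n → Fin n → Prop) [DecidableRel E] :
    p3Count n E = #(p3Set n E) := rfl

theorem xiCount_eq_card_xiSet (n : ℕ) (E : Fin n → Fin n → Prop) [DecidableRel E] :
    xiCount n E = #(xiSet n E) := rfl

section LongestEdge

variable {n : ℕ} [NeZero n] {E : Fin n → Fin n → Prop} {u w : Fin n}

theorem CircInterval.deleteEdge (hci : CircInterval n E) (hl : IsLongestEdge n E u w) :
    CircInterval n (deleteEdge E u w) := by
  intro a b c hab hbc hac hlt ⟨hac', _⟩
  obtain ⟨h1, h2⟩ := hci a b c hab hbc hac hlt hac'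
  have hmax := hl.2 a c hac'
  refine ⟨⟨h1, ?_⟩, ⟨h2, ?_⟩⟩
  · rintro ⟨rfl, rfl⟩
    omega
  · rintro ⟨rfl, rfl⟩
    have := cdist_add_cdist_of_lt hlt
    have := cdist_eq_zero_iff.not.mpr hab
    omega

theorem IsLongestEdge.cdist_lt_of_not_adj (hci : CircInterval n E) (hl : IsLongestEdge n E u w)
    {x : Fin n} (hxu : x ≠ u) (hux : ¬E u x) : cdist n u w < cdist n u x := by
  by_contra! h
  rcases h.lt_or_eq with h | h
  · have hxw : x ≠ w := by rintro rfl; exact hux hl.1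
    have huw : u ≠ w := by rintro rfl; rw [cdist_eq_zero_iff.mpr rfl] at h; omega
    exact hux (hci u x w hxu.symm hxw huw h hl.1).1
  · exact hux (cdist_right_injective u h ▸ hl.1)

variable [DecidableRel E]

theorem card_p3Set_sdiff_deleteEdge_le (hci : CircInterval n E) (hl : IsLongestEdge n E u w) :
    #(p3Set n E \ p3Set n (deleteEdge E u w)) ≤ n - cdist n u w - 1 := by
  set A : Finset (Fin n) := {x | InducedP3 E u w x}
  set B : Finset (Fin n) := {y | InducedP3 E y u w}
  have hsub : p3Set n E \ p3Set n (deleteEdge E u w) ⊆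
      A.image (fun x => (u, w, x)) ∪ B.image (fun y => (y, u, w)) := by
    intro p hp
    rcases mem_p3Set_sdiff_deleteEdge hp with ⟨x, rfl, hx⟩ | ⟨y, rfl, hy⟩
    · exact mem_union_left _ (mem_image_of_mem _ (by simpa [A] using hx))
    · exact mem_union_right _ (mem_image_of_mem _ (by simpa [B] using hy))
  have hdisj : Disjoint A B :=
    disjoint_filter.mpr fun _ _ ⟨_, _, _, _, _, _, _, _, hnxu⟩ ⟨_, _, _, hxu, _⟩ => hnxu hxu
  have hfar : A ∪ B ⊆ ({x | cdist n u x ∈ Ioo (cdist n u w) n} : Finset (Fin n)) := by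
    intro x hx
    refine mem_filter.mpr ⟨mem_univ _, mem_Ioo.mpr ⟨?_, cdist_lt u x⟩⟩
    rcases mem_union.mp hx with hA | hB
    · obtain ⟨-, -, hux, -, -, -, -, hnux, -⟩ := (mem_filter.mp hA).2
      exact hl.cdist_lt_of_not_adj hci hux.symm hnux
    · obtain ⟨hxu, -, -, -, -, hnux, -, -, -⟩ := (mem_filter.mp hB).2
      exact hl.cdist_lt_of_not_adj hci hxu hnux
  calc #(p3Set n E \ p3Set n (deleteEdge E u w))
      _ ≤ #(A.image (fun x => (u, w, x)) ∪ B.image (fun y => (y, u, w))) := card_le_card hsub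
      _ ≤ #A + #B := (card_union_le _ _).trans (add_le_add card_image_le card_image_le)
      _ = #(A ∪ B) := (card_union_of_disjoint hdisj).symm
      _ ≤ _ := card_le_card hfar
      _ = n - cdist n u w - 1 := card_filter_cdist_mem_Ioo u le_rfl

theorem le_card_p3Set_deleteEdge_sdiff (htf : TwoFree E) (hci : CircInterval n E)
    (hl : IsLongestEdge n E u w) :
    cdist n u w - 1 ≤ #(p3Set n (deleteEdge E u w) \ p3Set n E) := by
  have hcard := card_filter_cdist_mem_Ioo u (a := 0) (cdist_lt u w).le
  rw [Nat.sub_zero] at hcard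
  rw [← hcard]
  refine card_le_card_of_injOn (fun x => (u, x, w)) (fun x hx => ?_)
    (fun x _ y _ h => (Prod.ext_iff.mp (Prod.ext_iff.mp h).2).1)
  obtain ⟨hux0, hxw0⟩ := mem_Ioo.mp (mem_filter.mp hx).2
  have hxu : x ≠ u := fun h => hux0.ne' (cdist_eq_zero_iff.mpr h.symm)
  have hxw : x ≠ w := by rintro rfl; exact lt_irrefl _ hxw0
  have huw : u ≠ w := by rintro rfl; exact htf.1 u hl.1
  obtain ⟨hEux, hExw⟩ := hci u x w hxu.symm hxw huw hxw0 hl.1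
  simp only [p3Set, mem_coe, mem_sdiff, mem_filter, mem_univ, true_and]
  exact ⟨⟨hxu.symm, hxw, huw, ⟨hEux, fun h => hxw h.2⟩, ⟨hExw, fun h => hxu h.1⟩,
    fun h => htf.2 _ _ ⟨hEux, h.1⟩, fun h => htf.2 _ _ ⟨hExw, h.1⟩, fun h => h.2 ⟨rfl, rfl⟩,
    fun h => htf.2 _ _ ⟨hl.1, h.1⟩⟩, fun ⟨_, _, _, _, _, _, _, hnuw, _⟩ => hnuw hl.1⟩

theorem exists_short_nonEdge_of_mem_p3Set_sdiff (hci : CircInterval n E)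
    (hl : IsLongestEdge n E u w) (hβ : n ≤ 2 * cdist n u w) {p : Fin n × Fin n × Fin n}
    (hp : p ∈ p3Set n E \ p3Set n (deleteEdge E u w)) :
    ∃ a b, a ≠ b ∧ ¬E a b ∧ ¬E b a ∧ cdist n a b < cdist n u w := by
  rcases mem_p3Set_sdiff_deleteEdge hp with ⟨x, -, hx⟩ | ⟨y, -, hy⟩
  · obtain ⟨-, -, hux, -, -, -, -, hnux, hnxu⟩ := hx
    have hfar := hl.cdist_lt_of_not_adj hci hux.symm hnux
    have := cdist_add_cdist_swap hux
    exact ⟨x, u, hux.symm, hnxu, hnux, by omega⟩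
  · obtain ⟨hyu, -, hyw, -, -, hnuy, -, hnyw, hnwy⟩ := hy
    have hfar := hl.cdist_lt_of_not_adj hci hyu hnuy
    have := cdist_add_cdist_of_lt hfar
    have := cdist_lt u y
    exact ⟨w, y, hyw.symm, hnwy, hnyw, by omega⟩

theorem xiSet_deleteEdge_ssubset (hl : IsLongestEdge n E u w) (hβ : 2 * cdist n u w ≤ n)
    {a b : Fin n} (hab : a ≠ b) (hnab : ¬E a b) (hnba : ¬E b a)
    (hshort : cdist n a b < cdist n u w) :
    xiSet n (deleteEdge E u w) ⊂ xiSet n E := by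
  have huw : u ≠ w := by rintro rfl; rw [cdist_eq_zero_iff.mpr rfl] at hshort; omega
  have hwu := cdist_add_cdist_swap huw
  have hsub : xiSet n (deleteEdge E u w) ⊆ xiSet n E := by
    rintro ⟨c, d, e, f⟩ hr
    simp only [xiSet, mem_filter, mem_univ, true_and] at hr ⊢
    obtain ⟨⟨hcd, -⟩, hef, hnef, hnfe, hlt⟩ := hr
    have := hl.2 c d hcd
    refine ⟨hcd, hef, fun h => ?_, fun h => ?_, hlt⟩
    · obtain ⟨rfl, rfl⟩ : e = u ∧ f = w := by_contra fun h' => hnef ⟨h, h'⟩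
      omega
    · obtain ⟨rfl, rfl⟩ : f = u ∧ e = w := by_contra fun h' => hnfe ⟨h, h'⟩
      omega
  refine (ssubset_iff_of_subset hsub).mpr ⟨(u, w, a, b), ?_, fun h => ?_⟩
  · simpa [xiSet] using ⟨hl.1, hab, hnab, hnba, hshort⟩
  · simp [xiSet, deleteEdge] at h

end LongestEdge

theorem optimal_beta_lt_half (n : ℕ) (hn : 4 ≤ n)
    (E : Fin n → Fin n → Prop) [DecidableRel E] (hopt : Optimal n E) :
    ∀ u v : Fin n, E u v → 2 * cdist n u v < n := by
  intro a b hab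
  have : NeZero n := ⟨by omega⟩
  obtain ⟨htf, hci, hopt⟩ := hopt
  obtain ⟨u, w, hl⟩ := exists_isLongestEdge ⟨a, b, hab⟩
  by_contra! hlong
  have hβ : n ≤ 2 * cdist n u w := hlong.trans (Nat.mul_le_mul_left 2 (hl.2 a b hab))
  have hlost := card_p3Set_sdiff_deleteEdge_le hci hl
  have hgained := le_card_p3Set_deleteEdge_sdiff htf hci hl
  obtain ⟨hp3, hxi⟩ := hopt _ inferInstance (htf.deleteEdge u w) (hci.deleteEdge hl)
  rw [p3Count_eq_card_p3Set, p3Count_eq_card_p3Set] at hp3 hxi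
  rw [xiCount_eq_card_xiSet, xiCount_eq_card_xiSet] at hxi
  have hcount := card_sdiff_add_card (p3Set n E) (p3Set n (deleteEdge E u w))
  rw [union_comm, ← card_sdiff_add_card] at hcount
  have hhalf : 2 * cdist n u w = n := by omega
  have hsame : #(p3Set n (deleteEdge E u w)) = #(p3Set n E) := by omega
  obtain ⟨p, hp⟩ : (p3Set n E \ p3Set n (deleteEdge E u w)).Nonempty := card_pos.mp (by omega)
  obtain ⟨x, y, hxy, hnxy, hnyx, hshort⟩ := exists_short_nonEdge_of_mem_p3Set_sdiff hci hl hβ hp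
  exact (card_lt_card (xiSet_deleteEdge_ssubset hl hhalf.le hxy hnxy hnyx hshort)).not_ge
    (hxi hsame)
end
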